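/- The transfer entropy T(A→S | S=s, do(A=a)) := H(S'|S=s) − H(S'|S=s, do(A=a)) satisfies, for every action a with p(a|s)>0, the lower bound T(A→S | S=s, do(A=a)) ≥ min_{a'} (1 − 1/p(a'|s)) · H(S'|S=s), where the minimum is over actions a' with p(a'|s) > 0. -/

import Mathlib

/-!
Entropy is concave, so the entropy `H` of the mixture `m = ∑ π a' • p(·|a')` dominates the
average `∑ π a' H(p(·|a'))` of the entropies of its components. These are nonnegative, so in
particular `π a · H(p(·|a)) ≤ H`, i.e. `H(p(·|a)) ≤ H / π a`, and the bound follows from `H ≥ 0`.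
-/

open Finset

noncomputable section

namespace TransferEntropy

variable {S A : Type} [Fintype S]

def shannonEntropy (p : S → ℝ) : ℝ := ∑ s, Real.negMulLog (p s)

lemma shannonEntropy_eq_neg_sum_mul_log (p : S → ℝ) :
    shannonEntropy p = -∑ s, p s * Real.log (p s) := by
  simp only [shannonEntropy, Real.negMulLog_eq_neg, sum_neg_distrib]

lemma shannonEntropy_nonneg {p : S → ℝ} (hp0 : ∀ s, 0 ≤ p s) (hp1 : ∑ s, p s = 1) :
    0 ≤ shannonEntropy p :=
  sum_nonneg fun s _ =>
    Real.negMulLog_nonneg (hp0 s) (hp1 ▸ single_le_sum (fun t _ => hp0 t) (mem_univ s))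

lemma sum_mul_shannonEntropy_le_shannonEntropy_mixture [Fintype A] {w : A → ℝ}
    (hw0 : ∀ a, 0 ≤ w a) (hw1 : ∑ a, w a = 1) {p : A → S → ℝ} (hp0 : ∀ a s, 0 ≤ p a s) :
    ∑ a, w a * shannonEntropy (p a) ≤ shannonEntropy fun s => ∑ a, w a * p a s := by
  simp only [shannonEntropy, mul_sum]
  rw [sum_comm]
  exact sum_le_sum fun s _ => Real.concaveOn_negMulLog.le_map_sum (fun a _ => hw0 a) hw1
    fun a _ => Set.mem_Ici.mpr (hp0 a s)

lemma mul_shannonEntropy_le_shannonEntropy_mixture [Fintype A] {w : A → ℝ}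
    (hw0 : ∀ a, 0 ≤ w a) (hw1 : ∑ a, w a = 1) {p : A → S → ℝ} (hp0 : ∀ a s, 0 ≤ p a s)
    (hp1 : ∀ a, ∑ s, p a s = 1) (a : A) :
    w a * shannonEntropy (p a) ≤ shannonEntropy fun s => ∑ a, w a * p a s :=
  calc w a * shannonEntropy (p a)
      ≤ ∑ b, w b * shannonEntropy (p b) :=
        single_le_sum (f := fun b => w b * shannonEntropy (p b))
          (fun b _ => mul_nonneg (hw0 b) (shannonEntropy_nonneg (hp0 b) (hp1 b))) (mem_univ a)
    _ ≤ _ := sum_mul_shannonEntropy_le_shannonEntropy_mixture hw0 hw1 hp0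

end TransferEntropy

end

open TransferEntropy in
/-- Lower bound on transfer entropy: for every action `a` (with full-support policy),
`T(A→S | S=s, do(A=a)) ≥ min_{a'} (1 − 1/p(a'|s)) · H(S'|S=s)`. -/
theorem transfer_entropy_lower_bound
    {S A : Type} [Fintype S] [Fintype A] [Nonempty A]
    (pT : A → S → ℝ)
    (hT0 : ∀ a s', 0 ≤ pT a s')
    (hT1 : ∀ a, ∑ s' : S, pT a s' = 1)
    (π : A → ℝ)
    (hπpos : ∀ a, 0 < π a)
    (hπ1 : ∑ a : A, π a = 1)
    (m : S → ℝ) (hm : ∀ s', m s' = ∑ a : A, π a * pT a s')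
    (H : ℝ) (hH : H = -∑ s' : S, m s' * Real.log (m s'))
    (a : A) :
    H - (-∑ s' : S, pT a s' * Real.log (pT a s'))
      ≥ (Finset.univ.inf' Finset.univ_nonempty (fun a' : A => 1 - 1 / π a')) * H := by
  have hHm : H = shannonEntropy m := by rw [hH, shannonEntropy_eq_neg_sum_mul_log]
  obtain rfl : m = fun s' => ∑ a, π a * pT a s' := funext hm
  rw [← shannonEntropy_eq_neg_sum_mul_log]
  have hH0 : 0 ≤ H := hHm ▸ shannonEntropy_nonneg
    (fun s' => sum_nonneg fun b _ => mul_nonneg (hπpos b).le (hT0 b s'))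
    (by rw [sum_comm]; simp only [← mul_sum, hT1, mul_one, hπ1])
  have hmix : π a * shannonEntropy (pT a) ≤ H :=
    hHm ▸ mul_shannonEntropy_le_shannonEntropy_mixture (fun b => (hπpos b).le) hπ1 hT0 hT1 a
  have hmin : univ.inf' univ_nonempty (fun a' => 1 - 1 / π a') ≤ 1 - 1 / π a :=
    inf'_le _ (mem_univ a)
  have hdiv : shannonEntropy (pT a) ≤ H / π a := (le_div_iff₀' (hπpos a)).mpr hmix
  calc univ.inf' univ_nonempty (fun a' => 1 - 1 / π a') * H
      ≤ (1 - 1 / π a) * H := mul_le_mul_of_nonneg_right hmin hH0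
    _ = H - H / π a := by ring
    _ ≤ H - shannonEntropy (pT a) := by linarith
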